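/- arXiv:2605.15732 — 3 statements merged into one kernel-verified Lean document; each statement's English description precedes it below -/
import Mathlib

section
/- In the Hilbert-style system GR, the formula ■A ⊃ □□A is derivable for every formula A. -/
/-- Formulas of the bimodal logic GR: propositional variables, ⊥, ¬, ∧,
Gödel box `box` (□) and Rosser box `rbox` (■). -/
inductive GRFormula : Type
  | var : Nat → GRFormula
  | bot : GRFormula
  | neg : GRFormula → GRFormula
  | and : GRFormula → GRFormula → GRFormula
  | box : GRFormula → GRFormula
  | rbox : GRFormula → GRFormula

namespace GRFormula

/-- A ⊃ B defined as ¬(A ∧ ¬B). -/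
def impl (A B : GRFormula) : GRFormula := neg (and A (neg B))

/-- A ∨ B defined as ¬(¬A ∧ ¬B). -/
def or (A B : GRFormula) : GRFormula := neg (and (neg A) (neg B))

/-- ◇A := ¬□¬A. -/
def dia (A : GRFormula) : GRFormula := neg (box (neg A))

/-- A ≡ B := (A ⊃ B) ∧ (B ⊃ A). -/
def iff (A B : GRFormula) : GRFormula := and (impl A B) (impl B A)

/-- ⊤ := ¬⊥. -/
def top : GRFormula := neg bot

/-- Propositional tautology: true under every boolean valuation that
respects ⊥, ¬, ∧ (treating modal formulas as atoms). -/
def IsTaut (A : GRFormula) : Prop :=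
  ∀ v : GRFormula → Bool,
    v bot = false →
    (∀ B, v (neg B) = !v B) →
    (∀ B C, v (and B C) = (v B && v C)) →
    v A = true

end GRFormula

open GRFormula

/-- Hilbert-style derivability in the bimodal logic GR. -/
inductive GRProof : GRFormula → Prop
  | taut {A} : IsTaut A → GRProof A
  | axK (A B) : GRProof (impl (box (impl A B)) (impl (box A) (box B)))
  | axLob (A) : GRProof (impl (box (impl (box A) A)) (box A))
  | axRG (A) : GRProof (impl (rbox A) (box A))
  | axGGR (A) : GRProof (impl (box A) (box (rbox A)))
  | axGR (A) : GRProof (impl (box A) (or (box bot) (rbox A)))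
  | axDia (A) : GRProof (impl (dia (rbox A)) (dia A))
  | mp {A B} : GRProof (impl A B) → GRProof A → GRProof B
  | nec {A} : GRProof A → GRProof (box A)
  | conec {A} : GRProof (box A) → GRProof A

theorem GRFormula.isTaut_impl_trans (P Q R : GRFormula) :
    IsTaut (impl (impl P Q) (impl (impl Q R) (impl P R))) := by
  intro v _ hneg hand
  simp only [impl, hneg, hand]
  cases v P <;> cases v Q <;> cases v R <;> rfl

namespace GRProof

theorem impl_trans {P Q R : GRFormula} (hPQ : GRProof (impl P Q)) (hQR : GRProof (impl Q R)) :
    GRProof (impl P R) :=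
  mp (mp (taut (isTaut_impl_trans P Q R)) hPQ) hQR

theorem box_mono {P Q : GRFormula} (h : GRProof (impl P Q)) :
    GRProof (impl (box P) (box Q)) :=
  mp (axK P Q) (nec h)

end GRProof

theorem gr_rbox_imp_boxbox (A : GRFormula) :
    GRProof (impl (rbox A) (box (box A))) :=
  ((GRProof.axRG A).impl_trans (GRProof.axGGR A)).impl_trans (GRProof.box_mono (GRProof.axRG A))
end

section
/- Define a hypersequent-style notion of validity: for sequents Γ → Δ interpret f(Γ → Δ) = ⋀Γ ⊃ ⋁Δ and for Γ ⇒ Δ interpret f(Γ ⇒ Δ) = □(⋀Γ ⊃ ⋁Δ), and for a hypersequent take the disjunction of the images. Then the formula image of the 'merge' rule is sound for GR: if the GR Hilbert system derives f(H | Γ ≫ Δ | Θ ≫ Π), then it derives f(H | Γ,Θ ≫ Δ,Π), where ≫ is uniformly → or ⇒. -/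
open GRFormula

/-- A sequent: `arrow = false` is a `→`-sequent, `arrow = true` a `⇒`-sequent.
The antecedent and succedent are finite multisets of formulas, represented
as lists. -/
structure GRSequent : Type where
  modal : Bool
  ant : List GRFormula
  suc : List GRFormula

/-- ⋀Γ, with ⋀∅ := ⊤. -/
def bigAnd : List GRFormula → GRFormula
  | [] => GRFormula.top
  | [A] => A
  | A :: l => GRFormula.and A (bigAnd l)

/-- ⋁Δ, with ⋁∅ := ⊥. -/
def bigOr : List GRFormula → GRFormula
  | [] => GRFormula.bot
  | [A] => A
  | A :: l => GRFormula.or A (bigOr l)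

/-- Formula image of a sequent. -/
def GRSequent.f (S : GRSequent) : GRFormula :=
  if S.modal then box (impl (bigAnd S.ant) (bigOr S.suc))
  else impl (bigAnd S.ant) (bigOr S.suc)

/-- Formula image of a hypersequent (a list of sequents). -/
def hyperF : List GRSequent → GRFormula
  | [] => GRFormula.bot
  | [S] => S.f
  | S :: l => GRFormula.or S.f (hyperF l)

/-!
Each of the two merged components implies the merged sequent by propositional weakening, under □
by necessitation and K, and the formula image of a hypersequent is monotone in each component.
-/

namespace GRFormula

theorem bigAnd_eq_true_iff {v : GRFormula → Bool} (hbot : v bot = false)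
    (hneg : ∀ B, v (neg B) = !v B) (hand : ∀ B C, v (and B C) = (v B && v C)) :
    ∀ Γ : List GRFormula, v (bigAnd Γ) = true ↔ ∀ A ∈ Γ, v A = true
  | [] => by simp [bigAnd, top, hneg, hbot]
  | [A] => by simp [bigAnd]
  | A :: B :: Γ => by
      simp [bigAnd, hand, bigAnd_eq_true_iff hbot hneg hand (B :: Γ)]

theorem bigOr_eq_true_iff {v : GRFormula → Bool} (hbot : v bot = false)
    (hneg : ∀ B, v (neg B) = !v B) (hand : ∀ B C, v (and B C) = (v B && v C)) :
    ∀ Δ : List GRFormula, v (bigOr Δ) = true ↔ ∃ A ∈ Δ, v A = true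
  | [] => by simp [bigOr, hbot]
  | [A] => by simp [bigOr]
  | A :: B :: Δ => by
      have ih := bigOr_eq_true_iff hbot hneg hand (B :: Δ)
      simp only [bigOr, GRFormula.or, hneg, hand] at ih ⊢
      simp [ih]

theorem isTaut_impl_impl_of_subset {Γ Γ' Δ Δ' : List GRFormula} (hΓ : Γ ⊆ Γ') (hΔ : Δ ⊆ Δ') :
    IsTaut (impl (impl (bigAnd Γ) (bigOr Δ)) (impl (bigAnd Γ') (bigOr Δ'))) := by
  intro v hbot hneg hand
  have hΓv := bigAnd_eq_true_iff hbot hneg hand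
  have hΔv := bigOr_eq_true_iff hbot hneg hand
  have hant : v (bigAnd Γ') = true → v (bigAnd Γ) = true := fun h ↦
    (hΓv Γ).2 fun A hA ↦ (hΓv Γ').1 h A (hΓ hA)
  have hsuc : v (bigOr Δ) = true → v (bigOr Δ') = true := fun h ↦
    let ⟨A, hA, hvA⟩ := (hΔv Δ).1 h; (hΔv Δ').2 ⟨A, hΔ hA, hvA⟩
  simp only [impl, hneg, hand]
  revert hant hsuc
  cases v (bigAnd Γ) <;> cases v (bigAnd Γ') <;> cases v (bigOr Δ) <;> cases v (bigOr Δ') <;>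
    simp

end GRFormula

theorem hyperF_cons_of_ne_nil (S : GRSequent) {l : List GRSequent} (hl : l ≠ []) :
    hyperF (S :: l) = GRFormula.or S.f (hyperF l) := by
  cases l with
  | nil => exact absurd rfl hl
  | cons _ _ => rfl

namespace GRProof

variable {A B C : GRFormula}

theorem or_elim (hA : GRProof (impl A C)) (hB : GRProof (impl B C)) :
    GRProof (impl (GRFormula.or A B) C) := by
  refine ((taut ?_).mp hA).mp hB
  intro v _ hneg hand
  simp only [impl, GRFormula.or, hneg, hand]
  cases v A <;> cases v B <;> cases v C <;> rfl

theorem or_mono_right (h : GRProof (impl A B)) :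
    GRProof (impl (GRFormula.or C A) (GRFormula.or C B)) := by
  refine (taut ?_).mp h
  intro v _ hneg hand
  simp only [impl, GRFormula.or, hneg, hand]
  cases v A <;> cases v B <;> cases v C <;> rfl

theorem box_mono_s15 (h : GRProof (impl A B)) : GRProof (impl (box A) (box B)) :=
  (axK A B).mp (nec h)

theorem f_impl_f_of_subset (b : Bool) {Γ Γ' Δ Δ' : List GRFormula} (hΓ : Γ ⊆ Γ')
    (hΔ : Δ ⊆ Δ') : GRProof (impl (GRSequent.f ⟨b, Γ, Δ⟩) (GRSequent.f ⟨b, Γ', Δ'⟩)) := by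
  have hweaken := taut (isTaut_impl_impl_of_subset hΓ hΔ)
  cases b
  · exact hweaken
  · exact box_mono_s15 hweaken

theorem hyperF_append_pair_impl (H : List GRSequent) {S₁ S₂ T : GRSequent}
    (h₁ : GRProof (impl S₁.f T.f)) (h₂ : GRProof (impl S₂.f T.f)) :
    GRProof (impl (hyperF (H ++ [S₁, S₂])) (hyperF (H ++ [T]))) := by
  induction H with
  | nil =>
      rw [List.nil_append, List.nil_append, hyperF_cons_of_ne_nil S₁ (List.cons_ne_nil S₂ [])]
      exact or_elim h₁ h₂
  | cons S H ih =>
      simp only [List.cons_append, hyperF_cons_of_ne_nil S (List.append_ne_nil_of_right_ne_nil H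
        (List.cons_ne_nil _ _))]
      exact or_mono_right ih

end GRProof

theorem gr_merge_sound (H : List GRSequent) (b : Bool)
    (Γ Δ Θ Pi : List GRFormula)
    (h : GRProof (hyperF (H ++ [⟨b, Γ, Δ⟩, ⟨b, Θ, Pi⟩]))) :
    GRProof (hyperF (H ++ [⟨b, Γ ++ Θ, Δ ++ Pi⟩])) := by
  have hleft := GRProof.f_impl_f_of_subset b (List.subset_append_left Γ Θ)
    (List.subset_append_left Δ Pi)
  have hright := GRProof.f_impl_f_of_subset b (List.subset_append_right Γ Θ)
    (List.subset_append_right Δ Pi)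
  exact (GRProof.hyperF_append_pair_impl H hleft hright).mp h
end

section
/- Soundness of the GR hypersequent K-rule: if the GR Hilbert system derives H ∨ □((C ∧ G) ⊃ D), then it derives H ∨ ¬□C ∨ □(G ⊃ D). The analogous statements hold replacing the side hypothesis □C with ■C (using ■C ⊃ □C), with □C and conclusion premise □C (using □C ⊃ □□C), and with ■C and premise ■C (using ■C ⊃ □■C). -/
open GRFormula

/-!
Necessitating the tautology `(C ∧ G ⊃ D) ⊃ (C ⊃ (G ⊃ D))` and distributing `□` with K gives
`□(C ∧ G ⊃ D) ⊃ (□C ⊃ □(G ⊃ D))`. Hence the rule is sound for every side formula `E` with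
`⊢ E ⊃ □C`, the disjunct `H` being carried along propositionally. The variants with premise
`□C` or `■C` use `⊢ □C ⊃ □□C` and `⊢ ■C ⊃ □■C`, both consequences of `□A ⊃ □■A` and `■A ⊃ □A`.
-/

namespace GRProof

theorem impl_self (A : GRFormula) : GRProof (impl A A) := by
  refine taut fun v _ hneg hand => ?_
  simp only [impl, hneg, hand]
  cases v A <;> rfl

theorem impl_trans_s17 {A B C : GRFormula} (hAB : GRProof (impl A B)) (hBC : GRProof (impl B C)) :
    GRProof (impl A C) := by
  have t : IsTaut (impl (impl A B) (impl (impl B C) (impl A C))) := by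
    intro v _ hneg hand
    simp only [impl, hneg, hand]
    cases v A <;> cases v B <;> cases v C <;> rfl
  exact ((taut t).mp hAB).mp hBC

theorem box_impl_box {A B : GRFormula} (h : GRProof (impl A B)) :
    GRProof (impl (box A) (box B)) :=
  (axK A B).mp h.nec

theorem box_impl_box_box (C : GRFormula) : GRProof (impl (box C) (box (box C))) :=
  impl_trans_s17 (axGGR C) (box_impl_box (axRG C))

theorem rbox_impl_box_rbox (C : GRFormula) : GRProof (impl (rbox C) (box (rbox C))) :=
  impl_trans_s17 (axRG C) (axGGR C)

theorem box_and_impl (C G D : GRFormula) :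
    GRProof (impl (box (impl (and C G) D)) (impl (box C) (box (impl G D)))) := by
  have t : IsTaut (impl (impl (and C G) D) (impl C (impl G D))) := by
    intro v _ hneg hand
    simp only [impl, hneg, hand]
    cases v C <;> cases v G <;> cases v D <;> rfl
  exact impl_trans_s17 (box_impl_box (taut t)) (axK C (impl G D))

theorem or_neg_or_of_impl {H E B K Q : GRFormula} (hEB : GRProof (impl E B))
    (hK : GRProof (impl K (impl B Q))) (h : GRProof (or H K)) :
    GRProof (or H (or (neg E) Q)) := by
  have t : IsTaut (impl (impl E B)
      (impl (impl K (impl B Q)) (impl (or H K) (or H (or (neg E) Q))))) := by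
    intro v _ hneg hand
    simp only [impl, GRFormula.or, hneg, hand]
    cases v H <;> cases v E <;> cases v B <;> cases v K <;> cases v Q <;> rfl
  exact (((taut t).mp hEB).mp hK).mp h

theorem k_rule_of_impl_box {H E C G D : GRFormula} (hE : GRProof (impl E (box C)))
    (h : GRProof (or H (box (impl (and C G) D)))) :
    GRProof (or H (or (neg E) (box (impl G D)))) :=
  or_neg_or_of_impl hE (box_and_impl C G D) h

end GRProof

theorem gr_K_rule_sound (H C G D : GRFormula) :
    (GRProof (or H (box (impl (and C G) D))) →
      GRProof (or H (or (neg (box C)) (box (impl G D))))) ∧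
    (GRProof (or H (box (impl (and C G) D))) →
      GRProof (or H (or (neg (rbox C)) (box (impl G D))))) ∧
    (GRProof (or H (box (impl (and (box C) G) D))) →
      GRProof (or H (or (neg (box C)) (box (impl G D))))) ∧
    (GRProof (or H (box (impl (and (rbox C) G) D))) →
      GRProof (or H (or (neg (rbox C)) (box (impl G D))))) :=
  ⟨GRProof.k_rule_of_impl_box (GRProof.impl_self _),
    GRProof.k_rule_of_impl_box (GRProof.axRG C),
    GRProof.k_rule_of_impl_box (GRProof.box_impl_box_box C),
    GRProof.k_rule_of_impl_box (GRProof.rbox_impl_box_rbox C)⟩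
end
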